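/- Let k be a field of characteristic 3, let ε₁ ∈ k with ε₁ ≠ 0, let φ₁ ∈ k with φ₁ ≠ 0, and let φ₂, φ₃, γ₁, γ₂, γ₃, γ₄, γ₅ ∈ k. Set b₂ = ε₁t², b₄ = t²(φ₃t² + φ₂t + φ₁), b₆ = t²(γ₅t⁴ + γ₄t³ + γ₃t² + γ₂t + γ₁), and Δ = −b₂²(b₂b₆ − b₄²) + b₄³. Then for all α ∈ k and all c ∈ k with c ≠ 0 one has Δ ≠ α·t⁶(t−1)²(t+1)²(t−c)². (This shows the configurations IV I₂ I₂ I₂ and IV I₄ I₂, with the type IV fibre of Lang's case 3C over t = 0 and at least two distinct multiplicative fibres normalized to 1 and −1, do not exist on a rational elliptic surface in characteristic 3.) -/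

import Mathlib

/-!
Write `b₄ = t² f` and `b₆ = t² g`. Then `Δ = t⁶ (f³ + t² (ε₁² f² - ε₁³ g))`, so after cancelling `t⁶`
the two sides of the supposed identity can be compared in their two lowest coefficients.
Constant terms give `φ₁³ = α c²`, so `α ≠ 0`. In characteristic 3 the cube `f³` has no linear term,
so the left side has linear coefficient `0`, while on the right it is `-2αc = αc ≠ 0`.
-/

open Polynomial

theorem coeff_pow_expChar_eq_zero {R : Type*} [CommSemiring R] {p : ℕ} [ExpChar R p]
    (f : R[X]) {n : ℕ} (hn : ¬ p ∣ n) : (f ^ p).coeff n = 0 := by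
  rw [← map_frobenius_expand, coeff_map, coeff_expand (expChar_pos R p), if_neg hn, map_zero]

theorem coeff_one_sq {R : Type*} [CommSemiring R] (q : R[X]) :
    (q ^ 2).coeff 1 = 2 * q.coeff 0 * q.coeff 1 := by
  rw [sq, coeff_mul, Finset.Nat.antidiagonal_succ]
  simp only [Finset.Nat.antidiagonal_zero, Finset.map_singleton, Finset.sum_cons,
    Finset.sum_singleton, Function.Embedding.coe_prodMap, Function.Embedding.coeFn_mk,
    Prod.map_apply, Function.Embedding.refl_apply, zero_add, Nat.succ_eq_add_one]
  ring

section ThreeFibres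

variable {R : Type*} [CommRing R] (α c : R)

theorem coeff_zero_C_mul_sq_three_roots :
    (C α * ((X - 1) * (X + 1) * (X - C c)) ^ 2).coeff 0 = α * c ^ 2 := by
  simp [coeff_zero_eq_eval_zero]

theorem coeff_one_C_mul_sq_three_roots :
    (C α * ((X - 1) * (X + 1) * (X - C c)) ^ 2).coeff 1 = -2 * α * c := by
  have expand_cubic : (X - 1) * (X + 1) * (X - C c) = X ^ 3 - C c * X ^ 2 - X + C c := by ring
  rw [expand_cubic, coeff_C_mul, coeff_one_sq]
  simp only [coeff_add, coeff_sub, coeff_X_pow, OfNat.zero_ne_ofNat, ↓reduceIte, mul_coeff_zero,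
    coeff_C, mul_zero, sub_self, coeff_X, one_ne_zero, zero_add, OfNat.one_ne_ofNat, coeff_C_mul,
    zero_sub, add_zero, mul_neg, mul_one, neg_mul, neg_inj]
  ring

end ThreeFibres

theorem stmt10_general {k : Type*} [Field k] [CharP k 3]
    (ε₁ : k) (φ₁ : k) (hφ₁ : φ₁ ≠ 0)
    (φ₂ φ₃ γ₁ γ₂ γ₃ γ₄ γ₅ : k)
    (b₂ b₄ b₆ Δ : k[X])
    (hb₂ : b₂ = C ε₁ * X ^ 2)
    (hb₄ : b₄ = X ^ 2 * (C φ₃ * X ^ 2 + C φ₂ * X + C φ₁))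
    (hb₆ : b₆ = X ^ 2 * (C γ₅ * X ^ 4 + C γ₄ * X ^ 3 + C γ₃ * X ^ 2 + C γ₂ * X + C γ₁))
    (hΔ : Δ = -b₂ ^ 2 * (b₂ * b₆ - b₄ ^ 2) + b₄ ^ 3) :
    ∀ α c : k, c ≠ 0 →
      Δ ≠ C α * (X ^ 6 * (X - 1) ^ 2 * (X + 1) ^ 2 * (X - C c) ^ 2) := by
  intro α c hc h
  set f : k[X] := C φ₃ * X ^ 2 + C φ₂ * X + C φ₁
  set g : k[X] := C γ₅ * X ^ 4 + C γ₄ * X ^ 3 + C γ₃ * X ^ 2 + C γ₂ * X + C γ₁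
  rw [hΔ, hb₂, hb₄, hb₆] at h
  have key : f ^ 3 + X ^ 2 * (C ε₁ ^ 2 * f ^ 2 - C ε₁ ^ 3 * g)
      = C α * ((X - 1) * (X + 1) * (X - C c)) ^ 2 := by
    apply mul_left_cancel₀ (pow_ne_zero 6 (X_ne_zero : (X : k[X]) ≠ 0))
    linear_combination h
  have hconst := congrArg (coeff · 0) key
  have hlin := congrArg (coeff · 1) key
  simp only [coeff_add, coeff_zero_C_mul_sq_three_roots, coeff_one_C_mul_sq_three_roots,
    coeff_X_pow_mul', if_neg (by norm_num : ¬ 2 ≤ 0), if_neg (by norm_num : ¬ 2 ≤ 1),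
    add_zero] at hconst hlin
  rw [coeff_pow_expChar_eq_zero f (by norm_num)] at hlin
  have hα : α ≠ 0 := by
    rintro rfl
    simp [coeff_zero_eq_eval_zero, f, hφ₁] at hconst
  have h3 : (3 : k) = 0 := CharP.cast_eq_zero k 3
  exact mul_ne_zero hα hc (by linear_combination -hlin + α * c * h3)

theorem stmt10 {k : Type*} [Field k] [CharP k 3]
    (ε₁ : k) (hε₁ : ε₁ ≠ 0) (φ₁ : k) (hφ₁ : φ₁ ≠ 0)
    (φ₂ φ₃ γ₁ γ₂ γ₃ γ₄ γ₅ : k)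
    (b₂ b₄ b₆ Δ : k[X])
    (hb₂ : b₂ = C ε₁ * X ^ 2)
    (hb₄ : b₄ = X ^ 2 * (C φ₃ * X ^ 2 + C φ₂ * X + C φ₁))
    (hb₆ : b₆ = X ^ 2 * (C γ₅ * X ^ 4 + C γ₄ * X ^ 3 + C γ₃ * X ^ 2 + C γ₂ * X + C γ₁))
    (hΔ : Δ = -b₂ ^ 2 * (b₂ * b₆ - b₄ ^ 2) + b₄ ^ 3) :
    ∀ α c : k, c ≠ 0 →
      Δ ≠ C α * (X ^ 6 * (X - 1) ^ 2 * (X + 1) ^ 2 * (X - C c) ^ 2) :=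
  stmt10_general ε₁ φ₁ hφ₁ φ₂ φ₃ γ₁ γ₂ γ₃ γ₄ γ₅ b₂ b₄ b₆ Δ hb₂ hb₄ hb₆ hΔ
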